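/- arXiv:1509.04549 — 4 statements merged into one kernel-verified Lean document; each statement's English description precedes it below -/
import Mathlib

section
/- Let X_0, ..., X_{n-1} be 4-wise independent {0,1}-valued random variables, X = Σ X_i, and μ = E[X] ≥ 1. Then E[(X - μ)^4] ≤ 4μ². -/
/-! Center the variables, `Y i = X i - E[X i]`, so that `|Y i| ≤ 1`. For `S = ∑ a ∈ s, Y a` and
`b ∉ s`, every monomial of `S ^ k * Y b ^ j` involves at most `k + 1` distinct variables, so
4-wise independence gives `E[S ^ k * Y b ^ j] = E[S ^ k] * E[Y b ^ j]` for `k ≤ 3`. As the `Y i`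
are centered, `E[(S + Y b) ^ 4] = E[S ^ 4] + 6 E[S ^ 2] E[Y b ^ 2] + E[Y b ^ 4]`, and induction
on `s`, with `E[Y b ^ 4] ≤ E[Y b ^ 2]`, yields `E[S ^ 4] ≤ V + 3 V ^ 2` for `V = ∑ E[Y i ^ 2]`.
Finally `V ≤ ∑ E[X i] = m` for `{0,1}`-valued `X i`, and `m + 3 m ^ 2 ≤ 4 m ^ 2` since `m ≥ 1`. -/

open MeasureTheory ProbabilityTheory Finset

def KWiseIndepFun {Ω ι β : Type*} [MeasurableSpace Ω] [MeasurableSpace β]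
    (k : ℕ) (Y : ι → Ω → β) (μ : Measure Ω) : Prop :=
  ∀ s : Finset ι, #s ≤ k → iIndepFun (fun i : s => Y i.1) μ

namespace KWiseIndepFun

section General

variable {Ω ι β γ : Type*} [MeasurableSpace Ω] [MeasurableSpace β] [MeasurableSpace γ]
  {μ : Measure Ω} {k : ℕ} {Y : ι → Ω → β}

lemma mono {j : ℕ} (hY : KWiseIndepFun k Y μ) (hjk : j ≤ k) : KWiseIndepFun j Y μ :=
  fun s hs => hY s (hs.trans hjk)

lemma comp (hY : KWiseIndepFun k Y μ) (g : ι → β → γ) (hg : ∀ i, Measurable (g i)) :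
    KWiseIndepFun k (fun i => g i ∘ Y i) μ :=
  fun s hs => (hY s hs).comp (fun i : s => g i) fun i => hg i

end General

variable {Ω ι : Type*} [MeasurableSpace Ω] {μ : Measure Ω} {k : ℕ} {Y : ι → Ω → ℝ}

lemma integral_prod_pow (hY : KWiseIndepFun k Y μ) (hYm : ∀ i, Measurable (Y i))
    {s : Finset ι} (hs : #s ≤ k) (c : ι → ℕ) :
    ∫ ω, ∏ i ∈ s, Y i ω ^ c i ∂μ = ∏ i ∈ s, ∫ ω, Y i ω ^ c i ∂μ := by
  simp_rw [← prod_coe_sort s]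
  exact (hY s hs).integral_fun_prod_comp (f := fun i x => x ^ c i.1)
    (fun i => (hYm i).aemeasurable) fun i => (measurable_id.pow_const _).aestronglyMeasurable

lemma integral_prod_mul_pow (hY : KWiseIndepFun (k + 1) Y μ) (hYm : ∀ i, Measurable (Y i))
    (g : Fin k → ι) {b : ι} (hb : ∀ t, g t ≠ b) (j : ℕ) :
    ∫ ω, (∏ t, Y (g t) ω) * Y b ω ^ j ∂μ = (∫ ω, ∏ t, Y (g t) ω ∂μ) * ∫ ω, Y b ω ^ j ∂μ := by
  classical
  set T := univ.image g
  have hT : #T ≤ k := card_image_le.trans (by simp)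
  have hbT : b ∉ T := by simpa [T] using hb
  let c : ι → ℕ := fun a => if a = b then j else #{t | g t = a}
  have hcb : c b = j := if_pos rfl
  have hprod : ∀ ω, ∏ t, Y (g t) ω = ∏ a ∈ T, Y a ω ^ c a := fun ω => by
    rw [prod_comp (fun a => Y a ω) g]
    exact prod_congr rfl fun a ha => by simp only [c, if_neg (ne_of_mem_of_not_mem ha hbT)]
  have hins : ∀ ω, (∏ t, Y (g t) ω) * Y b ω ^ j = ∏ a ∈ insert b T, Y a ω ^ c a := fun ω => by
    rw [prod_insert hbT, hprod, hcb, mul_comm]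
  simp_rw [hins, hprod]
  rw [hY.integral_prod_pow hYm ((card_insert_le b T).trans (by omega)),
    (hY.mono k.le_succ).integral_prod_pow hYm hT, prod_insert hbT, hcb, mul_comm]

section Bounded

variable [IsFiniteMeasure μ] (hYm : ∀ i, Measurable (Y i)) (hY1 : ∀ i ω, |Y i ω| ≤ 1)
include hYm hY1

lemma integrable_prod_mul_pow {κ : Type*} (t : Finset κ) (g : κ → ι) (b : ι) (j : ℕ) :
    Integrable (fun ω => (∏ x ∈ t, Y (g x) ω) * Y b ω ^ j) μ := by
  refine .of_bound (by fun_prop) 1 (ae_of_all _ fun ω => ?_)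
  rw [Real.norm_eq_abs, abs_mul, abs_prod, abs_pow]
  exact mul_le_one₀ (prod_le_one (fun _ _ => abs_nonneg _) fun x _ => hY1 _ _)
    (by positivity) (pow_le_one₀ (abs_nonneg _) (hY1 b ω))

lemma integrable_sum_pow_mul_pow (s : Finset ι) (k : ℕ) (b : ι) (j : ℕ) :
    Integrable (fun ω => (∑ a ∈ s, Y a ω) ^ k * Y b ω ^ j) μ := by
  simp_rw [sum_pow', sum_mul]
  exact integrable_finsetSum _ fun g _ => integrable_prod_mul_pow hYm hY1 univ g b j

lemma integral_sum_pow_mul_pow (hY : KWiseIndepFun (k + 1) Y μ) {s : Finset ι} {b : ι}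
    (hb : b ∉ s) (j : ℕ) :
    ∫ ω, (∑ a ∈ s, Y a ω) ^ k * Y b ω ^ j ∂μ =
      (∫ ω, (∑ a ∈ s, Y a ω) ^ k ∂μ) * ∫ ω, Y b ω ^ j ∂μ := by
  simp_rw [sum_pow', sum_mul]
  rw [integral_finsetSum _ fun g _ => integrable_prod_mul_pow hYm hY1 univ g b j,
    integral_finsetSum _ fun g _ => by simpa using integrable_prod_mul_pow hYm hY1 univ g b 0,
    sum_mul]
  refine sum_congr rfl fun g hg => hY.integral_prod_mul_pow hYm g (fun t => ?_) j
  exact ne_of_mem_of_not_mem (Fintype.mem_piFinset.1 hg t) hb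

lemma integral_sum_insert_pow [DecidableEq ι] {s : Finset ι} {b : ι} (hb : b ∉ s) (n : ℕ) :
    ∫ ω, (∑ a ∈ insert b s, Y a ω) ^ n ∂μ =
      ∑ m ∈ range (n + 1), (∫ ω, (∑ a ∈ s, Y a ω) ^ m * Y b ω ^ (n - m) ∂μ) * n.choose m := by
  simp_rw [sum_insert hb, add_comm (Y b _), add_pow]
  rw [integral_finsetSum _ fun m _ => (integrable_sum_pow_mul_pow hYm hY1 s m b _).mul_const _]
  simp_rw [integral_mul_const]

lemma integral_pow_four_le_integral_sq (i : ι) :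
    ∫ ω, Y i ω ^ 4 ∂μ ≤ ∫ ω, Y i ω ^ 2 ∂μ := by
  have hint (j : ℕ) : Integrable (fun ω => Y i ω ^ j) μ :=
    .of_bound (by fun_prop) 1 (ae_of_all _ fun ω => by
      simpa [abs_pow] using pow_le_one₀ (abs_nonneg _) (hY1 i ω))
  refine integral_mono (hint 4) (hint 2) fun ω => ?_
  have hsq : Y i ω ^ 2 ≤ 1 := (sq_le_one_iff_abs_le_one _).2 (hY1 i ω)
  nlinarith [sq_nonneg (Y i ω)]

variable (hY0 : ∀ i, ∫ ω, Y i ω ∂μ = 0)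
include hY0

lemma integral_sum_eq_zero (s : Finset ι) : ∫ ω, ∑ a ∈ s, Y a ω ∂μ = 0 := by
  rw [integral_finsetSum _ fun i _ => .of_bound (hYm i).aestronglyMeasurable 1
    (ae_of_all _ (hY1 i))]
  exact sum_eq_zero fun i _ => hY0 i

variable [DecidableEq ι]

lemma integral_sum_insert_sq (hY : KWiseIndepFun 2 Y μ) {s : Finset ι} {b : ι} (hb : b ∉ s) :
    ∫ ω, (∑ a ∈ insert b s, Y a ω) ^ 2 ∂μ =
      ∫ ω, (∑ a ∈ s, Y a ω) ^ 2 ∂μ + ∫ ω, Y b ω ^ 2 ∂μ := by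
  rw [integral_sum_insert_pow hYm hY1 hb]
  simp only [sum_range_succ, sum_range_zero]
  rw [hY.integral_sum_pow_mul_pow hYm hY1 hb]
  simp only [pow_zero, tsub_zero, one_mul, Nat.choose_zero_right, Nat.cast_one, mul_one, zero_add,
    pow_one, integral_sum_eq_zero hYm hY1 hY0, Nat.add_one_sub_one, zero_mul,
    Nat.choose_succ_self_right, Nat.reduceAdd, Nat.cast_ofNat, add_zero, tsub_self, Nat.choose_self]
  ring

lemma integral_sum_insert_pow_four (hY : KWiseIndepFun 4 Y μ) {s : Finset ι} {b : ι}
    (hb : b ∉ s) :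
    ∫ ω, (∑ a ∈ insert b s, Y a ω) ^ 4 ∂μ = ∫ ω, (∑ a ∈ s, Y a ω) ^ 4 ∂μ +
      6 * (∫ ω, (∑ a ∈ s, Y a ω) ^ 2 ∂μ) * (∫ ω, Y b ω ^ 2 ∂μ) + ∫ ω, Y b ω ^ 4 ∂μ := by
  rw [integral_sum_insert_pow hYm hY1 hb]
  simp only [sum_range_succ, sum_range_zero]
  rw [(hY.mono (by norm_num)).integral_sum_pow_mul_pow (k := 1) hYm hY1 hb,
    (hY.mono (by norm_num)).integral_sum_pow_mul_pow (k := 2) hYm hY1 hb,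
    hY.integral_sum_pow_mul_pow (k := 3) hYm hY1 hb]
  simp only [pow_zero, tsub_zero, one_mul, Nat.choose, Nat.cast_one, mul_one, zero_add, pow_one,
    integral_sum_eq_zero hYm hY1 hY0, Nat.add_one_sub_one, zero_mul, add_zero, Nat.reduceAdd,
    Nat.cast_ofNat, Nat.reduceSub, hY0, mul_zero, tsub_self]
  ring

lemma integral_sum_sq (hY : KWiseIndepFun 2 Y μ) (s : Finset ι) :
    ∫ ω, (∑ a ∈ s, Y a ω) ^ 2 ∂μ = ∑ a ∈ s, ∫ ω, Y a ω ^ 2 ∂μ := by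
  induction s using Finset.induction_on with
  | empty => simp
  | insert b s hb ih =>
    rw [integral_sum_insert_sq hYm hY1 hY0 hY hb, ih, sum_insert hb, add_comm]

lemma integral_sum_pow_four_le (hY : KWiseIndepFun 4 Y μ) (s : Finset ι) :
    ∫ ω, (∑ a ∈ s, Y a ω) ^ 4 ∂μ ≤
      ∑ a ∈ s, ∫ ω, Y a ω ^ 2 ∂μ + 3 * (∑ a ∈ s, ∫ ω, Y a ω ^ 2 ∂μ) ^ 2 := by
  induction s using Finset.induction_on with
  | empty => simp
  | insert b s hb ih =>
    rw [integral_sum_insert_pow_four hYm hY1 hY0 hY hb,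
      integral_sum_sq hYm hY1 hY0 (hY.mono (by norm_num)), sum_insert hb]
    have hV : 0 ≤ ∑ a ∈ s, ∫ ω, Y a ω ^ 2 ∂μ :=
      sum_nonneg fun a _ => integral_nonneg fun ω => sq_nonneg _
    have hσ : 0 ≤ ∫ ω, Y b ω ^ 2 ∂μ := integral_nonneg fun ω => sq_nonneg _
    nlinarith [integral_pow_four_le_integral_sq (μ := μ) hYm hY1 b]

end Bounded

end KWiseIndepFun

section ZeroOne

variable {Ω : Type*} [MeasurableSpace Ω] {μ : Measure Ω} [IsProbabilityMeasure μ] {X : Ω → ℝ}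
  (hX : Measurable X) (h01 : ∀ ω, X ω = 0 ∨ X ω = 1)
include hX h01

lemma integrable_of_zero_or_one : Integrable X μ :=
  .of_bound hX.aestronglyMeasurable 1 (ae_of_all _ fun ω => by
    rcases h01 ω with h | h <;> simp [h])

lemma abs_sub_integral_le_one_of_zero_or_one (ω : Ω) : |X ω - ∫ ω', X ω' ∂μ| ≤ 1 := by
  have hp0 : 0 ≤ ∫ ω', X ω' ∂μ :=
    integral_nonneg fun ω' => by rcases h01 ω' with h | h <;> simp [h]
  have hp1 : ∫ ω', X ω' ∂μ ≤ 1 :=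
    (integral_mono (integrable_of_zero_or_one hX h01) (integrable_const 1) fun ω' => by
      rcases h01 ω' with h | h <;> simp [h]).trans_eq (by simp)
  rw [abs_le]
  rcases h01 ω with h | h <;> rw [h] <;> constructor <;> linarith

lemma integral_sub_integral_sq_le_of_zero_or_one :
    ∫ ω, (X ω - ∫ ω', X ω' ∂μ) ^ 2 ∂μ ≤ ∫ ω, X ω ∂μ := by
  set p := ∫ ω', X ω' ∂μ
  have hpt : ∀ ω, (X ω - p) ^ 2 = (1 - 2 * p) * X ω + p ^ 2 := fun ω => by
    rcases h01 ω with h | h <;> rw [h] <;> ring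
  simp_rw [hpt]
  rw [integral_add ((integrable_of_zero_or_one hX h01).const_mul _) (integrable_const _),
    integral_const_mul, integral_const]
  simp only [probReal_univ, one_smul]
  nlinarith [sq_nonneg p]

end ZeroOne

/-- Let `X_0, ..., X_{n-1}` be 4-wise independent `{0,1}`-valued random variables,
`X = Σ X_i`, and `m = E[X] ≥ 1`. Then `E[(X - m)^4] ≤ 4m²`. -/
theorem stmt6 {Ω : Type*} [MeasurableSpace Ω] (μ : Measure Ω) [IsProbabilityMeasure μ]
    (n : ℕ) (X : Fin n → Ω → ℝ) (hX : ∀ i, Measurable (X i))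
    (h01 : ∀ i ω, X i ω = 0 ∨ X i ω = 1)
    (hind : ∀ s : Finset (Fin n), s.card ≤ 4 →
      iIndepFun (fun i : s => X i.1) μ)
    (m : ℝ) (hm : m = ∫ ω, ∑ i, X i ω ∂μ) (hm1 : 1 ≤ m) :
    (∫ ω, ((∑ i, X i ω) - m) ^ 4 ∂μ) ≤ 4 * m ^ 2 := by
  set Y : Fin n → Ω → ℝ := fun i ω => X i ω - ∫ ω', X i ω' ∂μ
  have hYm : ∀ i, Measurable (Y i) := fun i => (hX i).sub_const _
  have hY1 : ∀ i ω, |Y i ω| ≤ 1 := fun i =>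
    abs_sub_integral_le_one_of_zero_or_one (hX i) (h01 i)
  have hY0 : ∀ i, ∫ ω, Y i ω ∂μ = 0 := fun i => by
    rw [integral_sub (integrable_of_zero_or_one (hX i) (h01 i)) (integrable_const _)]
    simp
  have hYind : KWiseIndepFun 4 Y μ :=
    KWiseIndepFun.comp hind (fun i x => x - ∫ ω, X i ω ∂μ) fun i => measurable_id.sub_const _
  have hm' : m = ∑ i, ∫ ω, X i ω ∂μ := by
    rw [hm, integral_finsetSum _ fun i _ => integrable_of_zero_or_one (hX i) (h01 i)]
  have hV : ∑ i, ∫ ω, Y i ω ^ 2 ∂μ ≤ m :=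
    hm' ▸ sum_le_sum fun i _ => integral_sub_integral_sq_le_of_zero_or_one (hX i) (h01 i)
  have hV0 : 0 ≤ ∑ i, ∫ ω, Y i ω ^ 2 ∂μ :=
    sum_nonneg fun i _ => integral_nonneg fun ω => sq_nonneg _
  have hcenter : ∀ ω, (∑ i, X i ω) - m = ∑ i, Y i ω := fun ω => by
    simp only [Y, sum_sub_distrib, hm']
  calc ∫ ω, ((∑ i, X i ω) - m) ^ 4 ∂μ = ∫ ω, (∑ i, Y i ω) ^ 4 ∂μ := by simp_rw [hcenter]
    _ ≤ ∑ i, ∫ ω, Y i ω ^ 2 ∂μ + 3 * (∑ i, ∫ ω, Y i ω ^ 2 ∂μ) ^ 2 :=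
      KWiseIndepFun.integral_sum_pow_four_le hYm hY1 hY0 hYind univ
    _ ≤ m + 3 * m ^ 2 := by gcongr
    _ ≤ 4 * m ^ 2 := by nlinarith
end

section
/- Let k ≥ 2 be a fixed integer and let X_0, ..., X_{n-1} be k-wise independent {0,1}-valued random variables with σ_i² = Var[X_i], X = Σ X_i, μ = E[X], σ² = Σ σ_i². Then E[(X - μ)^k] ≤ Σ_{c=1}^{⌊k/2⌋} (c^k / c!) · σ^{2c}. -/
/-!
Write `Y i = X i - E[X i]` and expand `(∑ i, Y i) ^ k` as a sum over tuples `f : Fin k → Fin n`.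
A tuple hits at most `k` indices, so by `k`-wise independence its expectation is the product,
over the indices `i` it hits, of the central moments of `X i` of order the multiplicity of `i`.
A multiplicity one makes this vanish; otherwise at most `k / 2` indices are hit, and each factor
is bounded by `Var[X i]` since `|Y i| ≤ 1`. At most `c ^ k` tuples have a given image of size `c`,
and `c! * ∑_{|S| = c} ∏_{i ∈ S} σ_i² ≤ (∑ i, σ_i²) ^ c`.
-/

open MeasureTheory ProbabilityTheory Finset

section Maclaurin

variable {ι R : Type*} [DecidableEq ι] [CommSemiring R] [PartialOrder R] [IsOrderedRing R]
  {v : ι → R} {s : Finset ι}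

theorem succ_mul_sum_powersetCard_prod_le (hv : ∀ i ∈ s, 0 ≤ v i) (c : ℕ) :
    (c + 1 : R) * ∑ S ∈ s.powersetCard (c + 1), ∏ i ∈ S, v i ≤
      (∑ i ∈ s, v i) * ∑ T ∈ s.powersetCard c, ∏ i ∈ T, v i := by
  have hT : ∀ i ∈ s, ∑ S ∈ s.powersetCard (c + 1) with i ∈ S, ∏ j ∈ S.erase i, v j ≤
      ∑ T ∈ s.powersetCard c, ∏ j ∈ T, v j := by
    intro i _
    have hinj : Set.InjOn (fun S : Finset ι => S.erase i)
        ↑((s.powersetCard (c + 1)).filter (i ∈ ·)) :=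
      fun S hS T hT h => erase_injOn' i (mem_filter.1 hS).2 (mem_filter.1 hT).2 h
    rw [← sum_image (f := fun T => ∏ j ∈ T, v j) hinj]
    refine sum_le_sum_of_subset_of_nonneg ?_ fun T hT _ => prod_nonneg fun j hj => ?_
    · simp only [subset_iff, mem_image, mem_filter, mem_powersetCard]
      rintro _ ⟨S, ⟨⟨hSs, hScard⟩, hiS⟩, rfl⟩
      exact ⟨(erase_subset i S).trans hSs, by rw [card_erase_of_mem hiS, hScard]; rfl⟩
    · exact hv j ((mem_powersetCard.1 hT).1 hj)
  calc (c + 1 : R) * ∑ S ∈ s.powersetCard (c + 1), ∏ i ∈ S, v i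
      = ∑ S ∈ s.powersetCard (c + 1), ∑ i ∈ S, v i * ∏ j ∈ S.erase i, v j := by
        rw [mul_sum]
        refine sum_congr rfl fun S hS => ?_
        rw [sum_congr rfl fun i hi => mul_prod_erase S v hi, sum_const,
          (mem_powersetCard.1 hS).2, nsmul_eq_mul]
        push_cast
        ring
    _ = ∑ i ∈ s, v i *
          ∑ S ∈ s.powersetCard (c + 1) with i ∈ S, ∏ j ∈ S.erase i, v j := by
        simp_rw [mul_sum]
        refine sum_comm' fun S i => ?_
        simp only [mem_filter, mem_powersetCard]
        constructor
        · rintro ⟨⟨hSs, hS⟩, hiS⟩; exact ⟨⟨⟨hSs, hS⟩, hiS⟩, hSs hiS⟩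
        · rintro ⟨⟨⟨hSs, hS⟩, hiS⟩, _⟩; exact ⟨⟨hSs, hS⟩, hiS⟩
    _ ≤ ∑ i ∈ s, v i * ∑ T ∈ s.powersetCard c, ∏ j ∈ T, v j :=
        sum_le_sum fun i hi => mul_le_mul_of_nonneg_left (hT i hi) (hv i hi)
    _ = (∑ i ∈ s, v i) * ∑ T ∈ s.powersetCard c, ∏ i ∈ T, v i := by rw [sum_mul]

theorem factorial_mul_sum_powersetCard_prod_le_pow (hv : ∀ i ∈ s, 0 ≤ v i) (c : ℕ) :
    (c.factorial : R) * ∑ S ∈ s.powersetCard c, ∏ i ∈ S, v i ≤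
      (∑ i ∈ s, v i) ^ c := by
  induction c with
  | zero => simp
  | succ c ih =>
    have hsum : 0 ≤ ∑ i ∈ s, v i := sum_nonneg hv
    calc ((c + 1).factorial : R) * ∑ S ∈ s.powersetCard (c + 1), ∏ i ∈ S, v i
        = c.factorial * ((c + 1 : R) * ∑ S ∈ s.powersetCard (c + 1), ∏ i ∈ S, v i) := by
          push_cast [Nat.factorial_succ]; ring
      _ ≤ c.factorial * ((∑ i ∈ s, v i) * ∑ T ∈ s.powersetCard c, ∏ i ∈ T, v i) :=
          mul_le_mul_of_nonneg_left (succ_mul_sum_powersetCard_prod_le hv c) (by positivity)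
      _ = (∑ i ∈ s, v i) * (c.factorial * ∑ T ∈ s.powersetCard c, ∏ i ∈ T, v i) := by
          ring
      _ ≤ (∑ i ∈ s, v i) * (∑ i ∈ s, v i) ^ c := by gcongr
      _ = (∑ i ∈ s, v i) ^ (c + 1) := by ring

end Maclaurin

section Tuples

variable {α ι : Type*} [Fintype α] [DecidableEq ι]

theorem two_mul_card_image_le (f : α → ι) (h : ∀ i ∈ univ.image f, 2 ≤ #{a | f a = i}) :
    2 * #(univ.image f) ≤ Fintype.card α :=
  calc 2 * #(univ.image f)
      = ∑ i ∈ univ.image f, 2 := by rw [sum_const, smul_eq_mul, mul_comm]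
    _ ≤ ∑ i ∈ univ.image f, #{a | f a = i} := sum_le_sum h
    _ = Fintype.card α := (card_eq_sum_card_image f univ).symm

variable [DecidableEq α] [Fintype ι]

theorem card_filter_image_eq_le (S : Finset ι) :
    #{f : α → ι | univ.image f = S} ≤ #S ^ Fintype.card α :=
  calc #{f : α → ι | univ.image f = S} ≤ #(Fintype.piFinset fun _ : α => S) := by
        refine card_le_card fun f hf => Fintype.mem_piFinset.2 fun a => ?_
        rw [← (mem_filter.1 hf).2]
        exact mem_image_of_mem f (mem_univ a)
    _ = #S ^ Fintype.card α := by simp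

theorem sum_comp_image_le {R : Type*} [CommSemiring R] [PartialOrder R] [IsOrderedRing R]
    (F : Finset ι → R) (hF : ∀ S, 0 ≤ F S) :
    ∑ f : α → ι, F (univ.image f) ≤
      ∑ S : Finset ι, ((#S ^ Fintype.card α : ℕ) : R) * F S := by
  rw [← sum_fiberwise univ (fun f : α → ι => univ.image f)]
  refine sum_le_sum fun S _ => ?_
  rw [sum_congr rfl fun f hf => by rw [(mem_filter.1 hf).2], sum_const, nsmul_eq_mul]
  exact mul_le_mul_of_nonneg_right (Nat.mono_cast (card_filter_image_eq_le S)) (hF S)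

end Tuples

theorem sum_filter_card_pow_mul_prod_le {ι : Type*} [Fintype ι] [DecidableEq ι] {v : ι → ℝ}
    (hv : ∀ i, 0 ≤ v i) {k : ℕ} (hk : k ≠ 0) :
    ∑ S : Finset ι with 2 * #S ≤ k, (#S : ℝ) ^ k * ∏ i ∈ S, v i ≤
      ∑ c ∈ Icc 1 (k / 2), (c : ℝ) ^ k / c.factorial * (∑ i, v i) ^ c := by
  have hcard :
      ∀ S ∈ (univ : Finset (Finset ι)).filter (2 * #· ≤ k), #S ∈ range (k / 2 + 1) :=
    fun S hS => mem_range.2 (by have := (mem_filter.1 hS).2; omega)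
  calc ∑ S : Finset ι with 2 * #S ≤ k, (#S : ℝ) ^ k * ∏ i ∈ S, v i
      = ∑ c ∈ range (k / 2 + 1),
          (c : ℝ) ^ k * ∑ S ∈ univ.powersetCard c, ∏ i ∈ S, v i := by
        rw [← sum_fiberwise_of_maps_to hcard]
        refine sum_congr rfl fun c hc => ?_
        rw [mul_sum, powersetCard_eq_filter, powerset_univ, filter_filter]
        refine sum_congr ?_ fun S hS => by rw [(mem_filter.1 hS).2]
        ext S
        simp only [mem_filter, mem_univ, true_and, mem_range] at hc ⊢
        constructor <;> rintro ⟨h1, h2⟩ <;> omega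
    _ ≤ ∑ c ∈ range (k / 2 + 1), (c : ℝ) ^ k / c.factorial * (∑ i, v i) ^ c := by
        refine sum_le_sum fun c _ => ?_
        rw [div_mul_eq_mul_div, mul_div_assoc]
        gcongr
        rw [le_div_iff₀' (by positivity)]
        exact factorial_mul_sum_powersetCard_prod_le_pow (fun i _ => hv i) c
    _ = ∑ c ∈ Icc 1 (k / 2), (c : ℝ) ^ k / c.factorial * (∑ i, v i) ^ c := by
        refine (sum_subset (fun c hc => ?_) fun c hc hc' => ?_).symm
        · simp only [mem_Icc, mem_range] at hc ⊢; omega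
        · obtain rfl : c = 0 := by simp only [mem_Icc, mem_range] at hc hc'; omega
          simp [hk]

section Moments

variable {Ω ι : Type*} [MeasurableSpace Ω] {μ : Measure Ω}

theorem integral_finset_prod_comp_of_iIndepFun {X : ι → Ω → ℝ} {S : Finset ι}
    (hind : iIndepFun (fun i : S => X i) μ) (hX : ∀ i ∈ S, AEMeasurable (X i) μ)
    {φ : ι → ℝ → ℝ} (hφ : ∀ i, Measurable (φ i)) :
    ∫ ω, ∏ i ∈ S, φ i (X i ω) ∂μ = ∏ i ∈ S, ∫ ω, φ i (X i ω) ∂μ := by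
  have h := hind.integral_fun_prod_comp (f := fun i : S => φ i) (fun i => hX i i.2)
    fun i => (hφ i).aestronglyMeasurable
  rwa [prod_coe_sort S fun i => ∫ ω, φ i (X i ω) ∂μ,
    integral_congr_ae (ae_of_all _ fun ω => prod_coe_sort S fun i => φ i (X i ω))] at h

variable [IsProbabilityMeasure μ]

theorem abs_sub_integral_le_one {X : Ω → ℝ} (h01 : ∀ ω, X ω ∈ Set.Icc 0 1) (ω : Ω) :
    |X ω - μ[X]| ≤ 1 := by
  have h0 : 0 ≤ μ[X] := integral_nonneg fun ω => (h01 ω).1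
  have h1 : μ[X] ≤ 1 := by
    simpa using integral_mono_of_nonneg (ae_of_all _ fun ω => (h01 ω).1)
      (integrable_const (1 : ℝ) : Integrable _ μ) (ae_of_all _ fun ω => (h01 ω).2)
  rw [abs_le]
  constructor <;> linarith [(h01 ω).1, (h01 ω).2]

theorem abs_centralMoment_le_variance {X : Ω → ℝ} (hX : AEMeasurable X μ)
    (h01 : ∀ ω, X ω ∈ Set.Icc 0 1) {t : ℕ} (ht : 2 ≤ t) :
    |centralMoment X t μ| ≤ variance X μ := by
  have hsq : Integrable (fun ω => (X ω - μ[X]) ^ 2) μ := by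
    refine .of_bound (by fun_prop) 1 (ae_of_all _ fun ω => ?_)
    rw [Real.norm_eq_abs, abs_pow]
    exact pow_le_one₀ (abs_nonneg _) (abs_sub_integral_le_one h01 ω)
  calc |centralMoment X t μ| ≤ ∫ ω, |X ω - μ[X]| ^ t ∂μ := by
        refine abs_integral_le_integral_abs.trans_eq ?_
        simp only [Pi.pow_apply, Pi.sub_apply, abs_pow]
    _ ≤ ∫ ω, (X ω - μ[X]) ^ 2 ∂μ := by
        refine integral_mono_of_nonneg (ae_of_all _ fun ω => by positivity) hsq
          (ae_of_all _ fun ω => ?_)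
        show |X ω - μ[X]| ^ t ≤ (X ω - μ[X]) ^ 2
        rw [← sq_abs]
        exact pow_le_pow_of_le_one (abs_nonneg _) (abs_sub_integral_le_one h01 ω) ht
    _ = variance X μ := (variance_eq_integral hX).symm

theorem integrable_prod_sub_integral {α : Type*} [Fintype α] {X : ι → Ω → ℝ}
    (hX : ∀ i, AEMeasurable (X i) μ) (h01 : ∀ i ω, X i ω ∈ Set.Icc 0 1) (f : α → ι) :
    Integrable (fun ω => ∏ a, (X (f a) ω - μ[X (f a)])) μ :=
  .of_bound (by fun_prop) 1 (ae_of_all _ fun ω => by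
    rw [Real.norm_eq_abs, abs_prod]
    exact prod_le_one (fun a _ => abs_nonneg _) fun a _ => abs_sub_integral_le_one (h01 _) ω)

theorem integral_prod_sub_integral_le {α : Type*} [Fintype α] [DecidableEq ι]
    {X : ι → Ω → ℝ} (hX : ∀ i, AEMeasurable (X i) μ)
    (h01 : ∀ i ω, X i ω ∈ Set.Icc 0 1) (f : α → ι)
    (hind : iIndepFun (fun i : univ.image f => X i) μ) :
    ∫ ω, ∏ a, (X (f a) ω - μ[X (f a)]) ∂μ ≤
      if 2 * #(univ.image f) ≤ Fintype.card α then ∏ i ∈ univ.image f, variance (X i) μ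
      else 0 := by
  have hfactor : ∫ ω, ∏ a, (X (f a) ω - μ[X (f a)]) ∂μ =
      ∏ i ∈ univ.image f, centralMoment (X i) #{a | f a = i} μ := by
    have hfiber : ∀ ω, ∏ a, (X (f a) ω - μ[X (f a)]) =
        ∏ i ∈ univ.image f, (X i ω - μ[X i]) ^ #{a | f a = i} :=
      fun ω => prod_comp (fun i => X i ω - μ[X i]) f
    simp_rw [hfiber]
    exact integral_finset_prod_comp_of_iIndepFun
      (φ := fun i x => (x - μ[X i]) ^ #{a | f a = i}) hind (fun i _ => hX i) fun i => by fun_prop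
  rw [hfactor]
  by_cases hpair : ∀ i ∈ univ.image f, 2 ≤ #{a | f a = i}
  · rw [if_pos (two_mul_card_image_le f hpair)]
    calc ∏ i ∈ univ.image f, centralMoment (X i) #{a | f a = i} μ
        ≤ ∏ i ∈ univ.image f, |centralMoment (X i) #{a | f a = i} μ| := by
          rw [← abs_prod]; exact le_abs_self _
      _ ≤ ∏ i ∈ univ.image f, variance (X i) μ :=
          prod_le_prod (fun i _ => abs_nonneg _)
            fun i hi => abs_centralMoment_le_variance (hX i) (h01 i) (hpair i hi)
  · push Not at hpair
    obtain ⟨i, hi, hlt⟩ := hpair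
    have hsingle : #{a | f a = i} = 1 := by
      obtain ⟨a, -, rfl⟩ := mem_image.1 hi
      have : 0 < #{b | f b = f a} := card_pos.2 ⟨a, mem_filter.2 ⟨mem_univ a, rfl⟩⟩
      omega
    rw [prod_eq_zero hi (by rw [hsingle, centralMoment_one])]
    split_ifs
    exacts [prod_nonneg fun i _ => variance_nonneg _ _, le_rfl]

end Moments

/-- Let `k ≥ 2` and let `X_0, ..., X_{n-1}` be `k`-wise independent `{0,1}`-valued random
variables with `σ_i² = Var[X_i]`, `X = Σ X_i`, `m = E[X]`, `σ² = Σ σ_i²`. Then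
`E[(X - m)^k] ≤ Σ_{c=1}^{⌊k/2⌋} (c^k / c!) · σ^{2c}`. -/
theorem stmt8 {Ω : Type*} [MeasurableSpace Ω] (μ : Measure Ω) [IsProbabilityMeasure μ]
    (k : ℕ) (hk : 2 ≤ k)
    (n : ℕ) (X : Fin n → Ω → ℝ) (hX : ∀ i, Measurable (X i))
    (h01 : ∀ i ω, X i ω = 0 ∨ X i ω = 1)
    (hind : ∀ s : Finset (Fin n), s.card ≤ k →
      iIndepFun (fun i : s => X i.1) μ)
    (σ2 : ℝ) (hσ2 : σ2 = ∑ i, variance (X i) μ)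
    (m : ℝ) (hm : m = ∫ ω, ∑ i, X i ω ∂μ) :
    (∫ ω, ((∑ i, X i ω) - m) ^ k ∂μ) ≤
      ∑ c ∈ Finset.Icc 1 (k / 2), ((c : ℝ) ^ k / (Nat.factorial c)) * σ2 ^ c := by
  have hX01 : ∀ i ω, X i ω ∈ Set.Icc (0 : ℝ) 1 := fun i ω => by
    rcases h01 i ω with h | h <;> simp [h]
  have hXint : ∀ i, Integrable (X i) μ := fun i =>
    .of_bound (hX i).aestronglyMeasurable 1 (ae_of_all _ fun ω => by
      rw [Real.norm_eq_abs, abs_of_nonneg (hX01 i ω).1]; exact (hX01 i ω).2)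
  have hexpand : ∀ ω, (∑ i, X i ω - m) ^ k =
      ∑ f : Fin k → Fin n, ∏ a, (X (f a) ω - μ[X (f a)]) := fun ω => by
    rw [hm, integral_finsetSum _ fun i _ => hXint i, ← sum_sub_distrib, Fintype.sum_pow]
  have hXm : ∀ i, AEMeasurable (X i) μ := fun i => (hX i).aemeasurable
  set F : Finset (Fin n) → ℝ :=
    fun S => if 2 * #S ≤ k then ∏ i ∈ S, variance (X i) μ else 0
  calc ∫ ω, (∑ i, X i ω - m) ^ k ∂μ
      = ∑ f : Fin k → Fin n, ∫ ω, ∏ a, (X (f a) ω - μ[X (f a)]) ∂μ := by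
        simp_rw [hexpand]
        exact integral_finsetSum _ fun f _ => integrable_prod_sub_integral hXm hX01 f
    _ ≤ ∑ f : Fin k → Fin n, F (univ.image f) := sum_le_sum fun f _ => by
        simpa using integral_prod_sub_integral_le hXm hX01 f
          (hind _ (card_image_le.trans (by simp)))
    _ ≤ ∑ S : Finset (Fin n), ((#S ^ k : ℕ) : ℝ) * F S := by
        simpa using sum_comp_image_le (α := Fin k) F fun S =>
          ite_nonneg (prod_nonneg fun i _ => variance_nonneg _ _) le_rfl
    _ ≤ _ := by
        simpa [F, hσ2, mul_ite, sum_filter] using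
          sum_filter_card_pow_mul_prod_le (fun i => variance_nonneg (X i) μ) (by omega : k ≠ 0)
end

section
/- Fix a hash function h : U → [t] and a starting location j ∈ [t]. Insert a sequence of distinct keys x_1, ..., x_n into a linear probing table (each key x is placed at the first empty location at or after h(x), with no wrap-around). If instead only a subsequence x_{i_1}, ..., x_{i_m} (with i_1 < ... < i_m) is inserted, then the set of keys occupying locations from j up to the first empty location (in the subsequence table) is a subset of the corresponding set when the full sequence is inserted. -/
/-- The first empty location at or after `h` in the table `T` (locations are naturals:
no wrap-around). -/
noncomputable def firstEmpty {K : Type*} (T : ℕ → Option K) (h : ℕ) : ℕ :=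
  sInf {j | h ≤ j ∧ T j = none}

/-- Linear probing insertion of a single key `x`: place `x` at the first empty location at
or after `hash x`. -/
noncomputable def insertKey {K : Type*} (hash : K → ℕ) (T : ℕ → Option K) (x : K) :
    ℕ → Option K :=
  Function.update T (firstEmpty T (hash x)) (some x)

/-- Insert a sequence of keys into the initially empty linear probing table. -/
noncomputable def insertList {K : Type*} (hash : K → ℕ) (xs : List K) : ℕ → Option K :=
  xs.foldl (insertKey hash) (fun _ => none)

/-- The set of keys occupying the consecutive filled locations from `j` up to (but not
including) the first empty location at or after `j`. -/
def scanSet {K : Type*} (T : ℕ → Option K) (j : ℕ) : Set K :=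
  {x | ∃ i, j ≤ i ∧ i < firstEmpty T j ∧ T i = some x}

/-!
Compare the two tables by a simulation invariant: every cell occupied in the subsequence
table is occupied in the full table, and every key of the subsequence table sits in the full
table at a location at least as large. Inserting a key only into the full table keeps this,
since it fills a cell and moves nothing. Inserting a key into both keeps it, since the first
empty cell at or after its hash comes no later in the smaller table. Since linear probing
leaves no hole between a key's hash and its location, a key of the subsequence scan set from
`j` cannot have been pushed in the full table past its first empty cell after `j`, which
lies beyond the key's hash.
-/

namespace LinearProbing

variable {K : Type*}

def occupied (T : ℕ → Option K) : Set ℕ := {i | T i ≠ none}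

lemma firstEmpty_le {T : ℕ → Option K} {h k : ℕ} (hk : h ≤ k) (hT : T k = none) :
    firstEmpty T h ≤ k :=
  Nat.sInf_le ⟨hk, hT⟩

lemma firstEmpty_mem {T : ℕ → Option K} (hf : (occupied T).Finite) (h : ℕ) :
    firstEmpty T h ∈ {j | h ≤ j ∧ T j = none} := by
  obtain ⟨k, hk⟩ := (hf.union (Set.finite_Iio h)).infinite_compl.nonempty
  simp only [occupied, Set.mem_compl_iff, Set.mem_union, Set.mem_ofPred_eq, Set.mem_Iio, not_or,
    not_not, not_lt] at hk
  exact Nat.sInf_mem ⟨k, hk.2, hk.1⟩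

lemma le_firstEmpty {T : ℕ → Option K} (hf : (occupied T).Finite) (h : ℕ) :
    h ≤ firstEmpty T h :=
  (firstEmpty_mem hf h).1

lemma apply_firstEmpty {T : ℕ → Option K} (hf : (occupied T).Finite) (h : ℕ) :
    T (firstEmpty T h) = none :=
  (firstEmpty_mem hf h).2

lemma firstEmpty_mono {Ty Tx : ℕ → Option K} (hocc : occupied Ty ⊆ occupied Tx)
    (hf : (occupied Tx).Finite) (h : ℕ) : firstEmpty Ty h ≤ firstEmpty Tx h :=
  firstEmpty_le (le_firstEmpty hf h) (not_not.mp fun hy => hocc hy (apply_firstEmpty hf h))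

section insertKey

variable (hash : K → ℕ) (T : ℕ → Option K) (x : K)

lemma insertKey_apply_firstEmpty : insertKey hash T x (firstEmpty T (hash x)) = some x :=
  Function.update_self ..

lemma insertKey_apply_of_ne {i : ℕ} (hi : i ≠ firstEmpty T (hash x)) :
    insertKey hash T x i = T i :=
  Function.update_of_ne hi ..

lemma occupied_insertKey :
    occupied (insertKey hash T x) = insert (firstEmpty T (hash x)) (occupied T) := by
  ext i
  by_cases hi : i = firstEmpty T (hash x)
  · simp [occupied, hi, insertKey_apply_firstEmpty]
  · simp [occupied, hi, insertKey_apply_of_ne hash T x hi]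

variable {T} in
lemma finite_occupied_insertKey (hf : (occupied T).Finite) :
    (occupied (insertKey hash T x)).Finite :=
  occupied_insertKey hash T x ▸ hf.insert _

end insertKey

lemma finite_occupied_foldl_insertKey (hash : K → ℕ) (xs : List K) {T : ℕ → Option K}
    (hf : (occupied T).Finite) : (occupied (xs.foldl (insertKey hash) T)).Finite := by
  induction xs generalizing T with
  | nil => exact hf
  | cons z xs ih => exact ih (finite_occupied_insertKey hash z hf)

def NoGapBelow (hash : K → ℕ) (T : ℕ → Option K) : Prop :=
  ∀ x ℓ, T ℓ = some x → hash x ≤ ℓ ∧ Set.Icc (hash x) ℓ ⊆ occupied T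

lemma NoGapBelow.insertKey {hash : K → ℕ} {T : ℕ → Option K} (hv : NoGapBelow hash T)
    (hf : (occupied T).Finite) (x : K) : NoGapBelow hash (insertKey hash T x) := by
  intro y ℓ hℓ
  rw [occupied_insertKey]
  by_cases hℓf : ℓ = firstEmpty T (hash x)
  · obtain rfl : y = x := by
      rw [hℓf, insertKey_apply_firstEmpty] at hℓ
      exact (Option.some.inj hℓ).symm
    refine ⟨hℓf ▸ le_firstEmpty hf _, fun k hk => ?_⟩
    rcases (hℓf ▸ hk.2).eq_or_lt with rfl | hlt
    · exact Set.mem_insert _ _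
    · exact Set.mem_insert_of_mem _ fun hnone => (firstEmpty_le hk.1 hnone).not_gt hlt
  · rw [insertKey_apply_of_ne hash T x hℓf] at hℓ
    obtain ⟨hle, hocc⟩ := hv y ℓ hℓ
    exact ⟨hle, hocc.trans (Set.subset_insert _ _)⟩

lemma NoGapBelow.foldl_insertKey {hash : K → ℕ} (xs : List K) {T : ℕ → Option K}
    (hv : NoGapBelow hash T) (hf : (occupied T).Finite) :
    NoGapBelow hash (xs.foldl (_root_.insertKey hash) T) := by
  induction xs generalizing T with
  | nil => exact hv
  | cons z xs ih => exact ih (hv.insertKey hf z) (finite_occupied_insertKey hash z hf)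

def SubTable (Ty Tx : ℕ → Option K) : Prop :=
  occupied Ty ⊆ occupied Tx ∧ ∀ x i, Ty i = some x → ∃ i', i ≤ i' ∧ Tx i' = some x

lemma SubTable.insertKey_right {hash : K → ℕ} {Ty Tx : ℕ → Option K} (hr : SubTable Ty Tx)
    (hf : (occupied Tx).Finite) (z : K) : SubTable Ty (insertKey hash Tx z) := by
  refine ⟨hr.1.trans (occupied_insertKey hash Tx z ▸ Set.subset_insert _ _), fun x i hi => ?_⟩
  obtain ⟨i', hii', hx⟩ := hr.2 x i hi
  have hne : i' ≠ firstEmpty Tx (hash z) := by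
    rintro rfl
    simp [apply_firstEmpty hf] at hx
  exact ⟨i', hii', by rwa [insertKey_apply_of_ne hash Tx z hne]⟩

lemma SubTable.insertKey {hash : K → ℕ} {Ty Tx : ℕ → Option K} (hr : SubTable Ty Tx)
    (hf : (occupied Tx).Finite) (x : K) :
    SubTable (insertKey hash Ty x) (insertKey hash Tx x) := by
  have hfy : (occupied Ty).Finite := hf.subset hr.1
  set fy := firstEmpty Ty (hash x)
  set fx := firstEmpty Tx (hash x)
  have hyx : fy ≤ fx := firstEmpty_mono hr.1 hf _
  constructor
  · rw [occupied_insertKey, occupied_insertKey]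
    refine Set.insert_subset ?_ (hr.1.trans (Set.subset_insert _ _))
    rcases hyx.eq_or_lt with heq | hlt
    · exact Set.mem_insert_iff.mpr (Or.inl heq)
    · exact Set.mem_insert_of_mem _ fun hnone =>
        (firstEmpty_le (le_firstEmpty hfy _) hnone).not_gt hlt
  · intro y i hi
    by_cases hify : i = fy
    · obtain rfl : y = x := by
        rw [hify, insertKey_apply_firstEmpty] at hi
        exact (Option.some.inj hi).symm
      exact ⟨fx, hify ▸ hyx, insertKey_apply_firstEmpty ..⟩
    · rw [insertKey_apply_of_ne hash Ty x hify] at hi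
      obtain ⟨i', hii', hx⟩ := hr.2 y i hi
      have hne : i' ≠ fx := by
        rintro rfl
        simp [fx, apply_firstEmpty hf] at hx
      exact ⟨i', hii', by rwa [insertKey_apply_of_ne hash Tx x hne]⟩

lemma SubTable.foldl_insertKey {hash : K → ℕ} {ys xs : List K} (hsub : ys.Sublist xs)
    {Ty Tx : ℕ → Option K} (hr : SubTable Ty Tx) (hf : (occupied Tx).Finite) :
    SubTable (ys.foldl (_root_.insertKey hash) Ty) (xs.foldl (_root_.insertKey hash) Tx) := by
  induction hsub generalizing Ty Tx with
  | slnil => exact hr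
  | cons z _ ih =>
    exact ih (hr.insertKey_right hf z) (finite_occupied_insertKey hash z hf)
  | cons_cons z _ ih =>
    exact ih (hr.insertKey hf z) (finite_occupied_insertKey hash z hf)

lemma SubTable.scanSet_subset {hash : K → ℕ} {Ty Tx : ℕ → Option K} (hr : SubTable Ty Tx)
    (hf : (occupied Tx).Finite) (hvy : NoGapBelow hash Ty) (hvx : NoGapBelow hash Tx)
    (j : ℕ) : scanSet Ty j ⊆ scanSet Tx j := by
  rintro x ⟨i, hji, hiy, hx⟩
  obtain ⟨i', hii', hx'⟩ := hr.2 x i hx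
  have hhash : hash x ≤ firstEmpty Tx j :=
    (hvy x i hx).1.trans (hiy.le.trans (firstEmpty_mono hr.1 hf j))
  refine ⟨i', hji.trans hii', not_le.mp fun hge => ?_, hx'⟩
  exact (hvx x i' hx').2 ⟨hhash, hge⟩ (apply_firstEmpty hf j)

end LinearProbing

open LinearProbing

theorem stmt16_general {K : Type*} (hash : K → ℕ) (xs ys : List K)
    (hsub : ys.Sublist xs) (j : ℕ) :
    scanSet (insertList hash ys) j ⊆ scanSet (insertList hash xs) j := by
  let empty : ℕ → Option K := fun _ => none
  have hfin : (occupied empty).Finite := by simp [empty, occupied]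
  have hgap : NoGapBelow hash empty := by simp [empty, NoGapBelow]
  have hsubTable : SubTable empty empty := ⟨subset_rfl, by simp [empty]⟩
  exact (hsubTable.foldl_insertKey hsub hfin).scanSet_subset
    (finite_occupied_foldl_insertKey hash xs hfin)
    (hgap.foldl_insertKey ys hfin) (hgap.foldl_insertKey xs hfin) j

/-- Monotonicity of linear probing: inserting only a subsequence of a sequence of distinct
keys yields, for every starting location `j`, a scan set contained in the scan set
obtained when the full sequence is inserted. -/
theorem stmt16 {K : Type*} (hash : K → ℕ) (xs ys : List K) (hnodup : xs.Nodup)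
    (hsub : ys.Sublist xs) (j : ℕ) :
    scanSet (insertList hash ys) j ⊆ scanSet (insertList hash xs) j :=
  stmt16_general hash xs ys hsub j
end

section
/- Consider a linear probing table with n keys stored and a run R (maximal interval of consecutive filled positions) of length r ≥ 2^{ℓ+2}. Then among the first four dyadic ℓ-intervals intersecting R, at least one interval I has at least 3·2^ℓ/4 of the non-query keys hashing into I. -/
/-!
Let `b m = (⌊s/2^ℓ⌋ + m)·2^ℓ`, so the first four dyadic blocks tile `[b 0, b 4)` with
`b 0 ≤ s < b 0 + 2^ℓ`. Since `r ≥ 4·2^ℓ`, the prefix `[s, b 4)` of the run has more than `3·2^ℓ`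
positions; they hold distinct keys, each hashing into `[s, b 4)`. At least `3·2^ℓ` of these keys
differ from the query key, and by pigeonhole one of the four blocks receives a quarter of them.
-/

open Set

theorem Set.ncard_inter_preimage_Ico_le_sum {α β : Type*} [LinearOrder β] (S : Set α)
    (f : α → β) {b : ℕ → β} (hb : Monotone b) (k : ℕ) :
    (S ∩ f ⁻¹' Ico (b 0) (b k)).ncard ≤
      ∑ m ∈ Finset.range k, (S ∩ f ⁻¹' Ico (b m) (b (m + 1))).ncard := by
  induction k with
  | zero => simp
  | succ k ih =>
    rw [← Ico_union_Ico_eq_Ico (hb k.zero_le) (hb k.le_succ), preimage_union,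
      inter_union_distrib_left, Finset.sum_range_succ]
    exact (ncard_union_le _ _).trans (by gcongr)

def storedKeys {K : Type*} {t : ℕ} (T : Fin t → Option K) : Set K := {x | ∃ i, T i = some x}

theorem storedKeys_finite {K : Type*} {t : ℕ} (T : Fin t → Option K) : (storedKeys T).Finite :=
  show (some ⁻¹' range T).Finite from (finite_range T).preimage (Option.some_injective K).injOn

theorem sub_le_ncard_storedKeys_inter_preimage_Ico {K : Type*} {t : ℕ} (T : Fin t → Option K)
    (hash : K → ℕ) {s r a B : ℕ} (hst : s + r ≤ t)
    (hfilled : ∀ i : Fin t, s ≤ (i : ℕ) → (i : ℕ) < s + r → (T i).isSome)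
    (hhash : ∀ (i : Fin t) (x : K), T i = some x → s ≤ (i : ℕ) → (i : ℕ) < s + r →
      s ≤ hash x ∧ hash x ≤ (i : ℕ))
    (hinj : ∀ (i j : Fin t) (x : K), T i = some x → T j = some x → i = j)
    (ha : a ≤ s) (hB : B ≤ s + r) :
    B - s ≤ (storedKeys T ∩ hash ⁻¹' Ico a B).ncard := by
  have hpositions : ((Fin.val : Fin t → ℕ) ⁻¹' Ico s B).ncard = B - s := by
    have hsub : Ico s B ⊆ range (Fin.val : Fin t → ℕ) := by
      rw [Fin.range_val]
      exact fun i hi => lt_of_lt_of_le hi.2 (by omega)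
    rw [ncard_preimage_of_injective_subset_range Fin.val_injective hsub, ncard_Ico_nat]
  rw [← hpositions, ← ncard_image_of_injective _ (Option.some_injective K)]
  have hkey : ∀ i : Fin t, s ≤ (i : ℕ) → (i : ℕ) < B → ∃ x, T i = some x :=
    fun i hsi hiB => Option.isSome_iff_exists.mp (hfilled i hsi (by omega))
  refine ncard_le_ncard_of_injOn T ?_ ?_ (((storedKeys_finite T).inter_of_left _).image _)
  · rintro i ⟨hsi, hiB⟩
    obtain ⟨x, hx⟩ := hkey i hsi hiB
    obtain ⟨hsx, hxi⟩ := hhash i x hx hsi (by omega)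
    exact ⟨x, ⟨⟨i, hx⟩, by omega, by omega⟩, hx.symm⟩
  · intro i hi j _ hij
    obtain ⟨x, hx⟩ := hkey i hi.1 hi.2
    exact hinj i j x hx (hij ▸ hx)

/-- Consider a linear probing table (locations `0, ..., t-1`, no wrap-around) containing a
run `R = [s, s+r)` of consecutive filled positions of length `r ≥ 2^{ℓ+2}`: every position
of `R` is filled, each key stored at position `i` of `R` has its hash in `[s, i]` (the
position before the run is empty), and distinct positions hold distinct keys. Then among
the first four dyadic `ℓ`-intervals intersecting `R` (the `m`-th being
`[(⌊s/2^ℓ⌋+m)·2^ℓ, (⌊s/2^ℓ⌋+m+1)·2^ℓ)` for `m = 0,1,2,3`), at least one interval `I` has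
at least `3·2^ℓ/4` of the stored keys other than the query key `q` hashing into `I`. -/
theorem stmt17 {K : Type*} (t : ℕ) (T : Fin t → Option K) (hash : K → ℕ) (q : K)
    (s r ℓ : ℕ) (hr : 2 ^ (ℓ + 2) ≤ r) (hst : s + r ≤ t)
    (hfilled : ∀ i : Fin t, s ≤ (i : ℕ) → (i : ℕ) < s + r → (T i).isSome)
    (hhash : ∀ (i : Fin t) (x : K), T i = some x → s ≤ (i : ℕ) → (i : ℕ) < s + r →
      s ≤ hash x ∧ hash x ≤ (i : ℕ))
    (hinj : ∀ (i j : Fin t) (x : K), T i = some x → T j = some x → i = j) :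
    ∃ m < 4, (3 : ℝ) * 2 ^ ℓ / 4 ≤
      ({x : K | x ≠ q ∧ (∃ i, T i = some x) ∧
        (s / 2 ^ ℓ + m) * 2 ^ ℓ ≤ hash x ∧
        hash x < (s / 2 ^ ℓ + m + 1) * 2 ^ ℓ}.ncard : ℝ) := by
  set b : ℕ → ℕ := fun m => (s / 2 ^ ℓ + m) * 2 ^ ℓ
  have hb : Monotone b := fun m n hmn => Nat.mul_le_mul_right _ (by omega)
  have hb0 : b 0 ≤ s := by simpa [b] using Nat.div_mul_le_self s (2 ^ ℓ)
  have hb1 : s < b 0 + 2 ^ ℓ := by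
    simpa [b] using Nat.lt_div_mul_add (a := s) (pow_pos two_pos ℓ)
  have hb4 : b 4 = b 0 + 4 * 2 ^ ℓ := by simp only [b]; ring
  have hr' : 4 * 2 ^ ℓ ≤ r := by rwa [pow_add, mul_comm] at hr
  set A := storedKeys T \ {q}
  have hcount :
      3 * 2 ^ ℓ ≤ ∑ m ∈ Finset.range 4, (A ∩ hash ⁻¹' Ico (b m) (b (m + 1))).ncard := calc
    3 * 2 ^ ℓ ≤ b 4 - s - 1 := by omega
    _ ≤ ((storedKeys T ∩ hash ⁻¹' Ico (b 0) (b 4)) \ {q}).ncard :=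
      (Nat.sub_le_sub_right (sub_le_ncard_storedKeys_inter_preimage_Ico T hash hst hfilled hhash
        hinj hb0 (by omega)) 1).trans (pred_ncard_le_ncard_sdiff_singleton _ _)
    _ = (A ∩ hash ⁻¹' Ico (b 0) (b 4)).ncard := by rw [inter_sdiff_right_comm]
    _ ≤ _ := ncard_inter_preimage_Ico_le_sum A hash hb 4
  obtain ⟨m, hm, hle⟩ : ∃ m ∈ Finset.range 4,
      (3 * 2 ^ ℓ / 4 : ℝ) ≤ (A ∩ hash ⁻¹' Ico (b m) (b (m + 1))).ncard := by
    refine Finset.exists_le_of_sum_le (by simp) ?_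
    calc ∑ _ ∈ Finset.range 4, (3 * 2 ^ ℓ / 4 : ℝ) = 3 * 2 ^ ℓ := by simp; ring
      _ ≤ _ := by exact_mod_cast hcount
  refine ⟨m, Finset.mem_range.mp hm, hle.trans_eq ?_⟩
  congr 2
  ext x
  simp only [A, storedKeys, b, mem_inter_iff, mem_sdiff, mem_ofPred_eq, mem_singleton_iff,
    mem_preimage, mem_Ico]
  tauto
end
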